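/- arXiv:2208.03501 — 2 statements merged into one kernel-verified Lean document; each statement's English description precedes it below -/
import Mathlib

section
/- Let A be a real symmetric positive definite matrix and g a nonzero vector not parallel to Ag. Define c_j = gᵀ A^j g for j = 0,...,4, and set φ₁ = c₁c₄ − c₂c₃, φ₂ = c₀c₄ − c₂², φ₃ = c₀c₃ − c₁c₂. Then φ₁ > 0, φ₂ > 0, and φ₃ > 0. -/
/-!
For every `j` the binary quadratic form
`(s, t) ↦ (s g + t A g)ᵀ Aʲ (s g + t A g) = c_j s² + 2 c_{j+1} s t + c_{j+2} t²`
is positive definite, since `Aʲ` is and `g`, `A g` are linearly independent; its discriminant is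
therefore negative: `c_{j+1}² < c_j c_{j+2}`. So the positive sequence `c` is strictly log-convex,
the ratios `c_{j+1} / c_j` increase strictly, and `φ₁`, `φ₃` compare two of these ratios, while
`c₂² < c₁ c₃ < c₀ c₄` gives `φ₂`.
-/

open Matrix

namespace Matrix

variable {ι 𝕜 : Type*} [Fintype ι] [RCLike 𝕜]

open scoped ComplexOrder MatrixOrder in
lemma PosDef.pow [DecidableEq ι] {M : Matrix ι ι 𝕜} (hM : M.PosDef)
    (k : ℕ) : (M ^ k).PosDef :=
  (hM.posSemidef.pow k).posDef_iff_isUnit.mpr (hM.isUnit.pow k)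

lemma IsSymm.mulVec_dotProduct {α : Type*} [CommSemiring α] {M : Matrix ι ι α} (hM : M.IsSymm)
    (x y : ι → α) : (M *ᵥ x) ⬝ᵥ y = x ⬝ᵥ (M *ᵥ y) := by
  rw [dotProduct_mulVec, ← mulVec_transpose, hM.eq]

lemma PosDef.dotProduct_mulVec_sq_lt {M : Matrix ι ι ℝ} (hM : M.PosDef) {x y : ι → ℝ}
    (hxy : LinearIndependent ℝ ![x, y]) :
    (x ⬝ᵥ M *ᵥ y) ^ 2 < (x ⬝ᵥ M *ᵥ x) * (y ⬝ᵥ M *ᵥ y) := by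
  set a := x ⬝ᵥ M *ᵥ x
  set b := x ⬝ᵥ M *ᵥ y
  have hsymm : y ⬝ᵥ M *ᵥ x = b := by
    rw [← (isHermitian_iff_isSymm.mp hM.isHermitian).mulVec_dotProduct, dotProduct_comm]
  have ha : 0 < a := by simpa using hM.dotProduct_mulVec_pos (hxy.ne_zero 0)
  have hz : b • x - a • y ≠ 0 := by
    rw [sub_eq_add_neg, ← neg_smul]
    intro h
    exact ha.ne' (neg_eq_zero.mp (LinearIndependent.pair_iff.mp hxy _ _ h).2)
  have hquad : (b • x - a • y) ⬝ᵥ M *ᵥ (b • x - a • y) = a * (a * (y ⬝ᵥ M *ᵥ y) - b ^ 2) := by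
    simp only [mulVec_sub, mulVec_smul, dotProduct_sub, sub_dotProduct, dotProduct_smul,
      smul_dotProduct, hsymm, smul_eq_mul]
    ring
  have := hM.dotProduct_mulVec_pos hz
  rw [star_trivial, hquad] at this
  nlinarith [pos_of_mul_pos_right this ha.le]

lemma PosDef.sq_dotProduct_pow_mulVec_lt [DecidableEq ι] {A : Matrix ι ι ℝ} (hA : A.PosDef)
    {g : ι → ℝ} (hg : LinearIndependent ℝ ![g, A *ᵥ g]) (j : ℕ) :
    (g ⬝ᵥ (A ^ (j + 1)) *ᵥ g) ^ 2 < (g ⬝ᵥ (A ^ j) *ᵥ g) * (g ⬝ᵥ (A ^ (j + 2)) *ᵥ g) := by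
  have hsymm := isHermitian_iff_isSymm.mp hA.isHermitian
  have := (hA.pow j).dotProduct_mulVec_sq_lt hg
  rwa [hsymm.mulVec_dotProduct, mulVec_mulVec, mulVec_mulVec, ← pow_succ, ← pow_succ'] at this

end Matrix

lemma strictMono_div_of_sq_lt_mul {c : ℕ → ℝ} (hpos : ∀ k, 0 < c k)
    (hlog : ∀ k, c (k + 1) ^ 2 < c k * c (k + 2)) : StrictMono fun k => c (k + 1) / c k :=
  strictMono_nat_of_lt_succ fun k => by
    rw [div_lt_div_iff₀ (hpos k) (hpos (k + 1))]
    nlinarith [hlog k]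

lemma succ_mul_lt_mul_succ_of_sq_lt_mul {c : ℕ → ℝ} (hpos : ∀ k, 0 < c k)
    (hlog : ∀ k, c (k + 1) ^ 2 < c k * c (k + 2)) {i j : ℕ} (hij : i < j) :
    c (i + 1) * c j < c i * c (j + 1) := by
  have := strictMono_div_of_sq_lt_mul hpos hlog hij
  rwa [div_lt_div_iff₀ (hpos i) (hpos j), mul_comm (c (j + 1))] at this

theorem phi_positive
    {n : ℕ} (A : Matrix (Fin n) (Fin n) ℝ) (g : Fin n → ℝ)
    (hA : A.PosDef) (hg : g ≠ 0)
    (hpar : ¬ ∃ t : ℝ, A.mulVec g = t • g)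
    (c : ℕ → ℝ) (hc : ∀ j, c j = g ⬝ᵥ (A ^ j).mulVec g) :
    0 < c 1 * c 4 - c 2 * c 3 ∧
    0 < c 0 * c 4 - c 2 ^ 2 ∧
    0 < c 0 * c 3 - c 1 * c 2 := by
  have hindep : LinearIndependent ℝ ![g, A *ᵥ g] :=
    (LinearIndependent.pair_iff' hg).mpr fun t ht => hpar ⟨t, ht.symm⟩
  have hpos : ∀ j, 0 < c j := fun j => by
    simpa [hc] using (hA.pow j).dotProduct_mulVec_pos hg
  have hlog : ∀ j, c (j + 1) ^ 2 < c j * c (j + 2) := fun j => by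
    simpa only [hc] using hA.sq_dotProduct_pow_mulVec_lt hindep j
  have cross {i j : ℕ} (hij : i < j) : c (i + 1) * c j < c i * c (j + 1) :=
    succ_mul_lt_mul_succ_of_sq_lt_mul hpos hlog hij
  refine ⟨?_, ?_, ?_⟩
  · linarith [cross (show 1 < 3 by norm_num)]
  · linarith [hlog 1, cross (show 0 < 3 by norm_num)]
  · linarith [cross (show 0 < 2 by norm_num)]
end

section
/- Short stepsize property: under the assumptions that A is symmetric positive definite and g ≠ 0 is not parallel to Ag, the smaller root α̃ = (φ₂ − √(φ₂² − 4φ₁φ₃))/(2φ₁) of φ₁α² − φ₂α + φ₃ = 0 satisfies α̃ < c₂/c₃, where c_j = gᵀ A^j g and φ₁ = c₁c₄ − c₂c₃, φ₂ = c₀c₄ − c₂², φ₃ = c₀c₃ − c₁c₂. -/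
open Matrix

/-!
Because `g` and `A g` are linearly independent, `t ↦ (g + t A g)ᵀ A^j (g + t A g)
= c_{j+2} t² + 2 c_{j+1} t + c_j` is positive, so its discriminant is negative:
`c_{j+1}² < c_j c_{j+2}`. Multiplying two consecutive such inequalities gives `φ₁ > 0` and
`φ₃ > 0`. At `r = c₂/c₃` the quadratic `φ₁ r² - φ₂ r + φ₃` equals `-φ₃ (c₂c₄ - c₃²)/c₃² < 0`,
so `r` lies strictly beyond its smaller root.
-/

theorem Matrix.PosDef.pow_s9 {n K : Type*} [Fintype n] [DecidableEq n] [Field K] [PartialOrder K]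
    [StarRing K] [StarOrderedRing K] {M : Matrix n n K} (hM : M.PosDef) : ∀ k : ℕ, (M ^ k).PosDef
  | 0 => by simpa using PosDef.one
  | 1 => by simpa using hM
  | k + 2 => by
    rw [pow_succ, pow_succ']
    simpa only [hM.isHermitian.eq] using
      (hM.pow_s9 k).conjTranspose_mul_mul_same (mulVec_injective_of_isUnit hM.isUnit)

theorem Matrix.IsSymm.mulVec_dotProduct_s9 {n R : Type*} [Fintype n] [CommSemiring R]
    {A : Matrix n n R} (hA : A.IsSymm) (u w : n → R) : (A *ᵥ u) ⬝ᵥ w = u ⬝ᵥ (A *ᵥ w) := by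
  rw [dotProduct_mulVec, ← mulVec_transpose, hA.eq]

theorem add_smul_ne_zero_of_not_exists_eq_smul {K V : Type*} [Field K] [AddCommGroup V]
    [Module K V] {u v : V} (hu : u ≠ 0) (huv : ¬ ∃ s : K, v = s • u) (t : K) :
    u + t • v ≠ 0 := by
  intro h
  rcases eq_or_ne t 0 with rfl | ht
  · exact hu (by simpa using h)
  · refine huv ⟨-t⁻¹, ?_⟩
    rw [eq_neg_of_add_eq_zero_left h, smul_neg, neg_smul, neg_neg, smul_smul, inv_mul_cancel₀ ht,
      one_smul]

theorem mul_lt_mul_of_sq_lt_mul_of_sq_lt {a b c d : ℝ} (hb : 0 < b) (hc : 0 < c)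
    (h₁ : b ^ 2 < a * c) (h₂ : c ^ 2 < b * d) : b * c < a * d := by
  nlinarith [mul_pos hb hc]

theorem sub_sqrt_div_two_mul_lt_of_quadratic_neg {a b c r : ℝ} (ha : 0 < a)
    (hr : a * r ^ 2 - b * r + c < 0) : (b - √(b ^ 2 - 4 * a * c)) / (2 * a) < r := by
  have hD : (b - 2 * a * r) ^ 2 < b ^ 2 - 4 * a * c := by nlinarith
  have := Real.lt_sqrt_of_sq_lt hD
  rw [div_lt_iff₀ (by positivity)]
  linarith

section KrylovMoment

variable {n : Type*} [Fintype n] [DecidableEq n] {A : Matrix n n ℝ} {g : n → ℝ}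

def krylovMoment (A : Matrix n n ℝ) (g : n → ℝ) (j : ℕ) : ℝ := g ⬝ᵥ (A ^ j) *ᵥ g

theorem krylovMoment_pos (hA : A.PosDef) (hg : g ≠ 0) (j : ℕ) : 0 < krylovMoment A g j := by
  simpa [krylovMoment] using (hA.pow_s9 j).dotProduct_mulVec_pos hg

theorem mulVec_dotProduct_pow_mulVec (hA : A.IsSymm) (u w : n → ℝ) (j : ℕ) :
    (A *ᵥ u) ⬝ᵥ (A ^ j *ᵥ w) = u ⬝ᵥ (A ^ (j + 1) *ᵥ w) := by
  rw [hA.mulVec_dotProduct_s9, mulVec_mulVec, ← pow_succ']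

theorem add_smul_mulVec_dotProduct_pow_mulVec (hA : A.IsSymm) (g : n → ℝ) (t : ℝ) (j : ℕ) :
    (g + t • A *ᵥ g) ⬝ᵥ (A ^ j *ᵥ (g + t • A *ᵥ g)) =
      krylovMoment A g (j + 2) * (t * t) + 2 * krylovMoment A g (j + 1) * t +
        krylovMoment A g j := by
  have hshift (i : ℕ) : A ^ i *ᵥ A *ᵥ g = A ^ (i + 1) *ᵥ g := by
    rw [mulVec_mulVec, ← pow_succ]
  simp only [krylovMoment, mulVec_add, mulVec_smul, hshift, add_dotProduct, dotProduct_add,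
    smul_dotProduct, dotProduct_smul, mulVec_dotProduct_pow_mulVec hA, smul_eq_mul]
  ring

theorem sq_krylovMoment_succ_lt (hA : A.PosDef) (hg : g ≠ 0)
    (hpar : ¬ ∃ t : ℝ, A *ᵥ g = t • g) (j : ℕ) :
    krylovMoment A g (j + 1) ^ 2 < krylovMoment A g j * krylovMoment A g (j + 2) := by
  have hsymm : A.IsSymm := isHermitian_iff_isSymm.mp hA.isHermitian
  have hquad (t : ℝ) : 0 < krylovMoment A g (j + 2) * (t * t) +
      2 * krylovMoment A g (j + 1) * t + krylovMoment A g j := by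
    rw [← add_smul_mulVec_dotProduct_pow_mulVec hsymm]
    simpa using
      (hA.pow_s9 j).dotProduct_mulVec_pos (add_smul_ne_zero_of_not_exists_eq_smul hg hpar t)
  have := discrim_lt_zero (krylovMoment_pos hA hg (j + 2)).ne' hquad
  rw [discrim] at this
  linarith

end KrylovMoment

theorem tilde_alpha_short
    {n : ℕ} (A : Matrix (Fin n) (Fin n) ℝ) (g : Fin n → ℝ)
    (hA : A.PosDef) (hg : g ≠ 0)
    (hpar : ¬ ∃ t : ℝ, A.mulVec g = t • g)
    (c : ℕ → ℝ) (hc : ∀ j, c j = g ⬝ᵥ (A ^ j).mulVec g)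
    (φ₁ φ₂ φ₃ : ℝ)
    (h1 : φ₁ = c 1 * c 4 - c 2 * c 3)
    (h2 : φ₂ = c 0 * c 4 - c 2 ^ 2)
    (h3 : φ₃ = c 0 * c 3 - c 1 * c 2) :
    (φ₂ - Real.sqrt (φ₂ ^ 2 - 4 * φ₁ * φ₃)) / (2 * φ₁) < c 2 / c 3 := by
  obtain rfl : c = krylovMoment A g := funext hc
  have hpos := krylovMoment_pos hA hg
  have hcs := sq_krylovMoment_succ_lt hA hg hpar
  have hφ₁ : 0 < φ₁ :=
    h1 ▸ sub_pos.2 (mul_lt_mul_of_sq_lt_mul_of_sq_lt (hpos 2) (hpos 3) (hcs 1) (hcs 2))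
  have hφ₃ : 0 < φ₃ :=
    h3 ▸ sub_pos.2 (mul_lt_mul_of_sq_lt_mul_of_sq_lt (hpos 1) (hpos 2) (hcs 0) (hcs 1))
  refine sub_sqrt_div_two_mul_lt_of_quadratic_neg hφ₁ ?_
  set c := krylovMoment A g
  have hc3 : c 3 ≠ 0 := (hpos 3).ne'
  have hvalue : φ₁ * (c 2 / c 3) ^ 2 - φ₂ * (c 2 / c 3) + φ₃ =
      -(φ₃ * (c 2 * c 4 - c 3 ^ 2)) / c 3 ^ 2 := by
    subst h1 h2 h3
    field_simp
    ring
  rw [hvalue]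
  exact div_neg_of_neg_of_pos (neg_neg_of_pos (mul_pos hφ₃ (sub_pos.2 (hcs 2)))) (by positivity)
end
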